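/- Let T be a strictly positive bounded operator on a Hilbert space H and let H₀ : K → H be bounded. If I - H₀* T⁻¹ H₀ is positive and invertible, then T⁻¹ᐟ² H₀ is a strict contraction and consequently T - H₀ H₀* is strictly positive. -/

import Mathlib

/-!
Put `A = S⁻¹ H₀`. Then `A† A = H₀† T⁻¹ H₀` and `T - H₀ H₀† = S (1 - A A†) S`.
In a C⋆-algebra, if `a ≥ 0` and `1 - a` is strictly positive then `‖a‖ < 1`, because `‖a‖`
lies in the spectrum of `a`; hence `‖A‖² = ‖A† A‖ < 1`. Conversely `‖A A†‖ = ‖A‖² < 1` makes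
`1 - A A†` strictly positive, and conjugating by the invertible self-adjoint `S` preserves this.
-/

open ContinuousLinearMap

section CStarAlgebra

variable {A : Type*} [CStarAlgebra A] [PartialOrder A] [StarOrderedRing A]

lemma norm_lt_one_of_isStrictlyPositive_one_sub {a : A} (ha : 0 ≤ a)
    (h : IsStrictlyPositive (1 - a)) : ‖a‖ < 1 := by
  nontriviality A
  have hmem : 1 - ‖a‖ ∈ spectrum ℝ (1 - a) := by
    rw [← map_one (algebraMap ℝ A), ← spectrum.singleton_sub_eq]
    exact Set.sub_mem_sub rfl (CStarAlgebra.norm_mem_spectrum_of_nonneg ha)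
  linarith [h.spectrum_pos hmem]

lemma isStrictlyPositive_one_sub_of_norm_lt_one {a : A} (ha : IsSelfAdjoint a) (h : ‖a‖ < 1) :
    IsStrictlyPositive (1 - a) := by
  refine (isStrictlyPositive_algebraMap (sub_pos.2 h)).of_le ?_
  rw [map_sub, map_one]
  exact sub_le_sub_left ha.le_algebraMap_norm_self 1

end CStarAlgebra

lemma IsSelfAdjoint.of_mul_eq_one {R : Type*} [Monoid R] [StarMul R] {s t : R}
    (hs : IsSelfAdjoint s) (h : s * t = 1) : IsSelfAdjoint t := by
  have h' : star t * s = 1 := by rw [← hs.star_eq, ← star_mul, h, star_one]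
  rw [isSelfAdjoint_iff]
  calc star t = star t * (s * t) := by rw [h, mul_one]
    _ = t := by rw [← mul_assoc, h', one_mul]

section Operators

variable {E F : Type*} [NormedAddCommGroup E] [InnerProductSpace ℂ E] [CompleteSpace E]
  [NormedAddCommGroup F] [InnerProductSpace ℂ F] [CompleteSpace F]

lemma norm_lt_one_of_isStrictlyPositive_one_sub_adjoint_comp_self (A : E →L[ℂ] F)
    (h : IsStrictlyPositive (1 - A.adjoint ∘L A)) : ‖A‖ < 1 := by
  have hlt := norm_lt_one_of_isStrictlyPositive_one_sub
    ((nonneg_iff_isPositive _).2 (isPositive_adjoint_comp_self A)) h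
  rw [norm_adjoint_comp_self] at hlt
  nlinarith [norm_nonneg A]

lemma isStrictlyPositive_one_sub_comp_adjoint (A : E →L[ℂ] F) (hA : ‖A‖ < 1) :
    IsStrictlyPositive (1 - A ∘L A.adjoint) := by
  refine isStrictlyPositive_one_sub_of_norm_lt_one
    (isPositive_self_comp_adjoint A).isSelfAdjoint ?_
  have h := norm_adjoint_comp_self A.adjoint
  rw [adjoint_adjoint, LinearIsometryEquiv.norm_map] at h
  rw [h]
  nlinarith [norm_nonneg A]

end Operators

lemma sub_eq_mul_one_sub_mul_mul {R : Type*} [Ring R] {s s' t : R} (x : R)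
    (hs : s * s' = 1) (hs' : s' * s = 1) (ht : s * s = t) :
    t - x = s * (1 - s' * x * s') * s := by
  rw [mul_sub, sub_mul, mul_one, ht, mul_assoc, mul_assoc, mul_assoc, hs', mul_one,
    ← mul_assoc, hs, one_mul]

theorem stmt3_general {H K : Type*} [NormedAddCommGroup H] [InnerProductSpace ℂ H]
    [CompleteSpace H] [NormedAddCommGroup K] [InnerProductSpace ℂ K] [CompleteSpace K]
    (T T' S S' : H →L[ℂ] H) (H₀ : K →L[ℂ] H)
    (hT2 : T' ∘L T = 1)
    (hSpos : S.IsPositive) (hSsq : S ∘L S = T) (hS1 : S ∘L S' = 1) (hS2 : S' ∘L S = 1)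
    (hpos : (1 - H₀.adjoint ∘L T' ∘L H₀).IsPositive)
    (hinv : ∃ V : K →L[ℂ] K, (1 - H₀.adjoint ∘L T' ∘L H₀) ∘L V = 1 ∧
      V ∘L (1 - H₀.adjoint ∘L T' ∘L H₀) = 1) :
    ‖S' ∘L H₀‖ < 1 ∧
      (T - H₀ ∘L H₀.adjoint).IsPositive ∧
      ∃ U : H →L[ℂ] H, (T - H₀ ∘L H₀.adjoint) ∘L U = 1 ∧
        U ∘L (T - H₀ ∘L H₀.adjoint) = 1 := by
  have hS : IsSelfAdjoint S := hSpos.isSelfAdjoint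
  have hS' : IsSelfAdjoint S' := hS.of_mul_eq_one hS1
  have hT' : T' = S' * S' := by
    have hSS' : S * S' = 1 := hS1
    refine left_inv_eq_right_inv (show T' * T = 1 from hT2) ?_
    rw [← hSsq, ← mul_def, mul_assoc, ← mul_assoc S S', hSS', one_mul, hSS']
  have hgram : (S' ∘L H₀).adjoint ∘L (S' ∘L H₀) = H₀.adjoint ∘L T' ∘L H₀ := by
    rw [adjoint_comp, isSelfAdjoint_iff'.1 hS', hT']
    rfl
  have hfactor : T - H₀ ∘L H₀.adjoint = S * (1 - (S' ∘L H₀) ∘L (S' ∘L H₀).adjoint) * S := by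
    rw [adjoint_comp, isSelfAdjoint_iff'.1 hS']
    exact sub_eq_mul_one_sub_mul_mul _ hS1 hS2 hSsq
  have hA : ‖S' ∘L H₀‖ < 1 := by
    refine norm_lt_one_of_isStrictlyPositive_one_sub_adjoint_comp_self _ ?_
    rw [hgram]
    exact (isUnit_iff_exists.2 hinv).isStrictlyPositive ((nonneg_iff_isPositive _).2 hpos)
  have hT : IsStrictlyPositive (T - H₀ ∘L H₀.adjoint) := by
    rw [hfactor]
    exact IsStrictlyPositive.conjugate_of_isUnit_of_isSelfAdjoint _ _
      (isUnit_iff_exists.2 ⟨S', hS1, hS2⟩) hS (isStrictlyPositive_one_sub_comp_adjoint _ hA)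
  exact ⟨hA, (nonneg_iff_isPositive _).1 hT.nonneg, isUnit_iff_exists.1 hT.isUnit⟩

/-- If `T` is strictly positive with positive square root `S` (so `S S = T`), and
`I - H₀* T⁻¹ H₀` is positive and invertible, then `T^{-1/2} H₀ = S⁻¹ H₀` is a strict
contraction and consequently `T - H₀ H₀*` is strictly positive. -/
theorem stmt3 {H K : Type*} [NormedAddCommGroup H] [InnerProductSpace ℂ H]
    [CompleteSpace H] [NormedAddCommGroup K] [InnerProductSpace ℂ K] [CompleteSpace K]
    (T T' S S' : H →L[ℂ] H) (H₀ : K →L[ℂ] H)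
    (hTpos : T.IsPositive) (hT1 : T ∘L T' = 1) (hT2 : T' ∘L T = 1)
    (hSpos : S.IsPositive) (hSsq : S ∘L S = T) (hS1 : S ∘L S' = 1) (hS2 : S' ∘L S = 1)
    (hpos : (1 - H₀.adjoint ∘L T' ∘L H₀).IsPositive)
    (hinv : ∃ V : K →L[ℂ] K, (1 - H₀.adjoint ∘L T' ∘L H₀) ∘L V = 1 ∧
      V ∘L (1 - H₀.adjoint ∘L T' ∘L H₀) = 1) :
    ‖S' ∘L H₀‖ < 1 ∧
      (T - H₀ ∘L H₀.adjoint).IsPositive ∧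
      ∃ U : H →L[ℂ] H, (T - H₀ ∘L H₀.adjoint) ∘L U = 1 ∧
        U ∘L (T - H₀ ∘L H₀.adjoint) = 1 :=
  stmt3_general T T' S S' H₀ hT2 hSpos hSsq hS1 hS2 hpos hinv
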